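/- Let q*(σ²) solve q = E[tanh²(λ(q) + √λ(q) Z)] with λ(q) = (σ² + α(1−q))⁻¹, and suppose q*(σ²) is differentiable in σ². Then d/dσ² [h_RS(q*(σ²); σ², α)] = (1/(2σ²)) · (1 − q*)/(σ² + α(1 − q*)), where h_RS is as in Tanaka's formula. -/

import Mathlib

open MeasureTheory ProbabilityTheory Real Filter

noncomputable def stdGaussian : Measure ℝ := gaussianReal 0 1

/-- `λ(q) = (σ² + α(1−q))⁻¹` with `s = σ²`. -/
noncomputable def lamOf (s α q : ℝ) : ℝ := (s + α * (1 - q))⁻¹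

/-- Tanaka's replica free-entropy functional. -/
noncomputable def hRS (s α q : ℝ) : ℝ :=
  (∫ z, Real.log (2 * Real.cosh (lamOf s α q + Real.sqrt (lamOf s α q) * z)) ∂stdGaussian)
    - (1 / 2) * lamOf s α q * (1 + q) - (1 / (2 * α)) * Real.log (1 + α / s * (1 - q))

/-!
Write `ψ(t) = E log 2cosh(t + √t Z)` and `Y = t + √t Z`. Differentiating under the integral in
`b = √t` (so that `Y = b² + b Z` is polynomial in the parameter) and integrating by parts against
the Gaussian density (Stein's lemma) gives `ψ'(t) = E tanh Y + (1 - E tanh² Y) / 2`. The Nishimori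
identity `E tanh Y = E tanh² Y`, which holds because the density of `Y` is `e^y` times an even
function, turns this into `ψ'(t) = (1 + E tanh² Y) / 2`. Hence the fixed-point equation for `q*`
says `ψ'(λ(q*)) = (1 + q*) / 2`, which is the stationarity condition `∂_q h_RS = 0`; in the chain
rule the terms in `q*'` cancel and only the explicit `σ²`-derivative remains.
-/

instance : IsProbabilityMeasure stdGaussian := by
  unfold _root_.stdGaussian; infer_instance

lemma integral_stdGaussian (f : ℝ → ℝ) :
    ∫ z, f z ∂stdGaussian = ∫ z, gaussianPDFReal 0 1 z * f z :=
  integral_gaussianReal_eq_integral_smul one_ne_zero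

lemma integrable_id_stdGaussian : Integrable id stdGaussian :=
  (memLp_id_gaussianReal 1).integrable (by norm_num)

lemma integrable_const_add_mul_abs_stdGaussian (c d : ℝ) :
    Integrable (fun z => c + d * |z|) stdGaussian :=
  (integrable_const c).add (integrable_id_stdGaussian.abs.const_mul d)

lemma gaussianPDFReal_zero_one (z : ℝ) :
    gaussianPDFReal 0 1 z = (√(2 * π))⁻¹ * exp (-(z ^ 2 / 2)) := by
  simp [gaussianPDFReal_def, neg_div]

lemma gaussianPDFReal_zero_one_neg (z : ℝ) : gaussianPDFReal 0 1 (-z) = gaussianPDFReal 0 1 z := by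
  simp [gaussianPDFReal_zero_one]

lemma hasDerivAt_gaussianPDFReal_zero_one (z : ℝ) :
    HasDerivAt (gaussianPDFReal 0 1) (-z * gaussianPDFReal 0 1 z) z := by
  have hexp : HasDerivAt (fun x : ℝ => -(x ^ 2 / 2)) (-z) z := by
    simpa using ((hasDerivAt_pow 2 z).div_const 2).fun_neg
  rw [funext gaussianPDFReal_zero_one]
  beta_reduce
  exact (hexp.exp.const_mul (√(2 * π))⁻¹).congr_deriv (by ring)

lemma integrable_mul_gaussianPDFReal_zero_one :
    Integrable fun z => z * gaussianPDFReal 0 1 z := by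
  have h := (integrable_mul_exp_neg_mul_sq (by norm_num : (0 : ℝ) < 1 / 2)).const_mul (√(2 * π))⁻¹
  refine h.congr (ae_of_all _ fun z => ?_)
  simp only [gaussianPDFReal_zero_one]
  ring_nf

/-- Gaussian integration by parts (Stein's lemma). -/
theorem integral_mul_eq_integral_deriv_stdGaussian {f f' : ℝ → ℝ}
    (hf : ∀ z, HasDerivAt f (f' z) z) {C C' : ℝ} (hfC : ∀ z, |f z| ≤ C) (hf'C : ∀ z, |f' z| ≤ C') :
    ∫ z, z * f z ∂stdGaussian = ∫ z, f' z ∂stdGaussian := by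
  have hφ := integrable_gaussianPDFReal 0 1
  have hfm : AEStronglyMeasurable f :=
    (continuous_iff_continuousAt.2 fun z => (hf z).continuousAt).aestronglyMeasurable
  have hf'm : AEStronglyMeasurable f' := by
    rw [show f' = deriv f from funext fun z => (hf z).deriv.symm]
    exact (measurable_deriv f).aestronglyMeasurable
  have hfφ' : Integrable fun z => f z * (-z * gaussianPDFReal 0 1 z) :=
    (integrable_mul_gaussianPDFReal_zero_one.bdd_mul hfm (ae_of_all _ hfC)).neg.congr
      (ae_of_all _ fun z => by simp only [Pi.neg_apply]; ring)
  have hparts := integral_mul_deriv_eq_deriv_mul_of_integrable (fun z _ => hf z)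
    (fun z _ => hasDerivAt_gaussianPDFReal_zero_one z) hfφ'
    (hφ.bdd_mul hf'm (ae_of_all _ hf'C)) (hφ.bdd_mul hfm (ae_of_all _ hfC))
  rw [integral_stdGaussian, integral_stdGaussian]
  calc ∫ z, gaussianPDFReal 0 1 z * (z * f z)
      = -∫ z, f z * (-z * gaussianPDFReal 0 1 z) := by
        rw [← integral_neg]; congr 1; ext z; ring
    _ = ∫ z, gaussianPDFReal 0 1 z * f' z := by
        rw [hparts, neg_neg]; simp only [mul_comm]

lemma hasDerivAt_tanh (x : ℝ) : HasDerivAt tanh (1 - tanh x ^ 2) x := by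
  have h : HasDerivAt (fun y => sinh y / cosh y) _ x :=
    (hasDerivAt_sinh x).div (hasDerivAt_cosh x) (cosh_pos x).ne'
  rw [show tanh = fun y => sinh y / cosh y from funext tanh_eq_sinh_div_cosh]
  convert h using 1
  field_simp

@[fun_prop]
lemma continuous_tanh : Continuous tanh :=
  continuous_iff_continuousAt.2 fun x => (hasDerivAt_tanh x).continuousAt

lemma abs_one_sub_tanh_sq_le_one (x : ℝ) : |1 - tanh x ^ 2| ≤ 1 := by
  have := tanh_sq_lt_one x
  rw [abs_le]; constructor <;> nlinarith [sq_nonneg (tanh x)]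

lemma hasDerivAt_log_two_cosh (x : ℝ) : HasDerivAt (fun y => log (2 * cosh y)) (tanh x) x := by
  convert ((hasDerivAt_cosh x).const_mul 2).log (by positivity [cosh_pos x]) using 1
  rw [tanh_eq_sinh_div_cosh]
  field_simp

lemma abs_log_two_cosh_le (x : ℝ) : |log (2 * cosh x)| ≤ log 2 + |x| := by
  have hcosh : cosh x ≤ exp |x| := by
    rw [← cosh_abs, cosh_eq]
    linarith [exp_le_exp.2 (neg_le_self (abs_nonneg x))]
  have hnonneg : 0 ≤ log (2 * cosh x) := log_nonneg (by linarith [one_le_cosh x])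
  rw [abs_of_nonneg hnonneg, ← log_exp |x|, ← log_mul two_ne_zero (exp_pos _).ne']
  exact log_le_log (by positivity) (by linarith)

section TanhIntegrals

variable {Ω : Type*} [MeasurableSpace Ω] {μ : Measure Ω} [IsFiniteMeasure μ] {f : Ω → ℝ}

lemma integrable_tanh_comp (hf : AEStronglyMeasurable f μ) : Integrable (fun ω => tanh (f ω)) μ :=
  .of_bound (continuous_tanh.comp_aestronglyMeasurable hf) 1
    (ae_of_all _ fun ω => (abs_tanh_lt_one (f ω)).le)

lemma integrable_tanh_sq_comp (hf : AEStronglyMeasurable f μ) :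
    Integrable (fun ω => tanh (f ω) ^ 2) μ :=
  .of_bound ((continuous_tanh.pow 2).comp_aestronglyMeasurable hf) 1
    (ae_of_all _ fun ω => by simpa using (tanh_sq_lt_one (f ω)).le)

end TanhIntegrals

lemma integral_tanh_sq_comp_lt_one {Ω : Type*} [MeasurableSpace Ω] {μ : Measure Ω}
    [IsProbabilityMeasure μ] {f : Ω → ℝ} (hf : AEStronglyMeasurable f μ) :
    ∫ ω, tanh (f ω) ^ 2 ∂μ < 1 := by
  have hpos : 0 < ∫ ω, (1 - tanh (f ω) ^ 2) ∂μ := by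
    rw [integral_pos_iff_support_of_nonneg (fun ω => sub_nonneg.2 (tanh_sq_lt_one _).le)
      ((integrable_const 1).sub (integrable_tanh_sq_comp hf))]
    simp [Function.support, sub_eq_zero, (tanh_sq_lt_one _).ne']
  rw [integral_sub (integrable_const 1) (integrable_tanh_sq_comp hf)] at hpos
  simpa using hpos

lemma integral_eq_zero_of_odd {g : ℝ → ℝ} (hg : ∀ x, g (-x) = -g x) : ∫ x, g x = 0 := by
  have h : ∫ x, g x = -∫ x, g x := by
    conv_lhs => rw [← integral_neg_eq_self]
    simp only [hg, integral_neg]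
  linarith

lemma tanh_sub_tanh_sq (y : ℝ) : tanh y - tanh y ^ 2 = sinh y / cosh y ^ 2 * exp (-y) := by
  rw [tanh_eq_sinh_div_cosh, ← cosh_sub_sinh]
  field_simp

lemma gaussianPDFReal_zero_one_mul_exp (b z : ℝ) :
    gaussianPDFReal 0 1 z * exp (-(b ^ 2 + b * z)) =
      exp (-(b ^ 2 / 2)) * gaussianPDFReal 0 1 (z + b) := by
  simp only [gaussianPDFReal_zero_one]
  rw [mul_assoc, ← exp_add, mul_left_comm, ← exp_add]
  ring_nf

/-- Nishimori identity for the scalar Gaussian channel `Y = b² + b Z`. -/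
theorem integral_tanh_eq_integral_tanh_sq (b : ℝ) :
    ∫ z, tanh (b ^ 2 + b * z) ∂stdGaussian = ∫ z, tanh (b ^ 2 + b * z) ^ 2 ∂stdGaussian := by
  set g : ℝ → ℝ := fun w => gaussianPDFReal 0 1 w * (sinh (b * w) / cosh (b * w) ^ 2)
  have hg : ∀ w, g (-w) = -g w := fun w => by
    simp only [g, gaussianPDFReal_zero_one_neg, mul_neg, sinh_neg, cosh_neg, neg_div]
  -- with `y = b² + b z = b (z + b)`, the density at `z` times `tanh y - tanh² y` is a multiple
  -- of `g (z + b)`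
  have hdiff : ∫ z, (tanh (b ^ 2 + b * z) - tanh (b ^ 2 + b * z) ^ 2) ∂stdGaussian = 0 :=
    calc _ = ∫ z, exp (-(b ^ 2 / 2)) * g (z + b) := by
          rw [integral_stdGaussian]
          congr 1; ext z
          rw [tanh_sub_tanh_sq, mul_left_comm, gaussianPDFReal_zero_one_mul_exp]
          simp only [g, show b * (z + b) = b ^ 2 + b * z by ring]
          ring
      _ = 0 := by rw [integral_const_mul, integral_add_right_eq_self g b,
          integral_eq_zero_of_odd hg, mul_zero]
  have hmeas : AEStronglyMeasurable (fun z : ℝ => b ^ 2 + b * z) stdGaussian := by fun_prop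
  rwa [integral_sub (integrable_tanh_comp hmeas) (integrable_tanh_sq_comp hmeas),
    sub_eq_zero] at hdiff

lemma integral_mul_tanh_eq_one_sub_integral_tanh_sq (b : ℝ) :
    ∫ z, z * tanh (b ^ 2 + b * z) ∂stdGaussian =
      b * (1 - ∫ z, tanh (b ^ 2 + b * z) ^ 2 ∂stdGaussian) := by
  have hderiv : ∀ z, HasDerivAt (fun z => tanh (b ^ 2 + b * z))
      ((1 - tanh (b ^ 2 + b * z) ^ 2) * b) z := fun z =>
    (hasDerivAt_tanh _).comp z
      (((hasDerivAt_id z).const_mul b).const_add _ |>.congr_deriv (mul_one b))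
  have hbound : ∀ z, |(1 - tanh (b ^ 2 + b * z) ^ 2) * b| ≤ |b| := fun z => by
    rw [abs_mul]
    exact mul_le_of_le_one_left (abs_nonneg b) (abs_one_sub_tanh_sq_le_one _)
  have hmeas : AEStronglyMeasurable (fun z : ℝ => b ^ 2 + b * z) stdGaussian := by fun_prop
  rw [integral_mul_eq_integral_deriv_stdGaussian hderiv (fun z => (abs_tanh_lt_one _).le) hbound,
    integral_mul_const, integral_sub (integrable_const 1) (integrable_tanh_sq_comp hmeas)]
  simp [mul_comm]

theorem hasDerivAt_integral_log_two_cosh_sq_add_mul (b : ℝ) :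
    HasDerivAt (fun x => ∫ z, log (2 * cosh (x ^ 2 + x * z)) ∂stdGaussian)
      (b * (1 + ∫ z, tanh (b ^ 2 + b * z) ^ 2 ∂stdGaussian)) b := by
  have hF_meas : ∀ x, AEStronglyMeasurable (fun z => log (2 * cosh (x ^ 2 + x * z))) stdGaussian :=
    fun x => (Continuous.log (by fun_prop) fun z => by
      positivity [cosh_pos (x ^ 2 + x * z)]).aestronglyMeasurable
  have hF_int : Integrable (fun z => log (2 * cosh (b ^ 2 + b * z))) stdGaussian := by
    refine (integrable_const_add_mul_abs_stdGaussian (log 2 + b ^ 2) |b|).mono' (hF_meas b)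
      (ae_of_all _ fun z => ?_)
    calc ‖log (2 * cosh (b ^ 2 + b * z))‖ ≤ log 2 + |b ^ 2 + b * z| := abs_log_two_cosh_le _
      _ ≤ log 2 + b ^ 2 + |b| * |z| := by
        have := abs_add_le (b ^ 2) (b * z)
        rw [abs_mul, abs_sq] at this
        linarith
  have h_bound : ∀ z, ∀ x ∈ Metric.ball b 1,
      ‖tanh (x ^ 2 + x * z) * (2 * x + z)‖ ≤ 2 * (|b| + 1) + |z| := fun z x hx => by
    have hx : |x| ≤ |b| + 1 := by
      have := abs_sub_abs_le_abs_sub x b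
      rw [Metric.mem_ball, Real.dist_eq] at hx
      linarith
    rw [norm_mul, Real.norm_eq_abs, Real.norm_eq_abs]
    calc |tanh (x ^ 2 + x * z)| * |2 * x + z| ≤ 1 * (2 * |x| + |z|) := by
          gcongr
          · exact (abs_tanh_lt_one _).le
          · exact (abs_add_le _ _).trans (by rw [abs_mul, abs_two])
      _ ≤ 2 * (|b| + 1) + |z| := by linarith
  have h_diff : ∀ z, ∀ x ∈ Metric.ball b 1, HasDerivAt (fun x => log (2 * cosh (x ^ 2 + x * z)))
      (tanh (x ^ 2 + x * z) * (2 * x + z)) x := fun z x _ => by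
    have hin : HasDerivAt (fun x => x ^ 2 + x * z) (2 * x + z) x :=
      ((hasDerivAt_pow 2 x).fun_add ((hasDerivAt_id x).mul_const z)).congr_deriv (by simp)
    exact (hasDerivAt_log_two_cosh _).comp x hin
  obtain ⟨-, hderiv⟩ := hasDerivAt_integral_of_dominated_loc_of_deriv_le
    (Metric.ball_mem_nhds b one_pos) (Eventually.of_forall hF_meas) hF_int
    (by fun_prop) (ae_of_all _ h_bound) ((integrable_const _).add integrable_id_stdGaussian.abs)
    (ae_of_all _ h_diff)
  have hmeas : AEStronglyMeasurable (fun z : ℝ => b ^ 2 + b * z) stdGaussian := by fun_prop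
  have hzT : Integrable (fun z => z * tanh (b ^ 2 + b * z)) stdGaussian :=
    integrable_id_stdGaussian.mul_bdd (continuous_tanh.comp_aestronglyMeasurable hmeas)
      (ae_of_all _ fun z => (abs_tanh_lt_one _).le)
  refine hderiv.congr_deriv ?_
  calc ∫ z, tanh (b ^ 2 + b * z) * (2 * b + z) ∂stdGaussian
      = ∫ z, (2 * b * tanh (b ^ 2 + b * z) + z * tanh (b ^ 2 + b * z)) ∂stdGaussian := by
        congr 1; ext z; ring
    _ = b * (1 + ∫ z, tanh (b ^ 2 + b * z) ^ 2 ∂stdGaussian) := by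
        rw [integral_add ((integrable_tanh_comp hmeas).const_mul _) hzT, integral_const_mul,
          integral_tanh_eq_integral_tanh_sq, integral_mul_tanh_eq_one_sub_integral_tanh_sq]
        ring

noncomputable def scalarFreeEntropy (t : ℝ) : ℝ :=
  ∫ z, log (2 * cosh (t + √t * z)) ∂stdGaussian

theorem hasDerivAt_scalarFreeEntropy {t : ℝ} (ht : 0 < t) :
    HasDerivAt scalarFreeEntropy ((1 + ∫ z, tanh (t + √t * z) ^ 2 ∂stdGaussian) / 2) t := by
  have h := (hasDerivAt_integral_log_two_cosh_sq_add_mul (√t)).comp t (hasDerivAt_sqrt ht.ne')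
  have heq : (fun x => ∫ z, log (2 * cosh (√x ^ 2 + √x * z)) ∂stdGaussian) =ᶠ[nhds t]
      scalarFreeEntropy :=
    eventually_of_mem (Ioi_mem_nhds ht) fun x (hx : 0 < x) => by
      simp only [scalarFreeEntropy, sq_sqrt hx.le]
  rw [sq_sqrt ht.le] at h
  refine (h.congr_of_eventuallyEq heq.symm).congr_deriv ?_
  field_simp

/-- Envelope theorem: `hstat` is the stationarity condition `∂_q h_RS = 0` at `q s`, so the
terms in `q'` cancel. -/
theorem hasDerivAt_hRS_comp {α s q' : ℝ} {q : ℝ → ℝ} (hα : α ≠ 0) (hs : 0 < s)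
    (hD : 0 < s + α * (1 - q s)) (hq : HasDerivAt q q' s)
    (hstat : HasDerivAt scalarFreeEntropy ((1 + q s) / 2) (lamOf s α (q s))) :
    HasDerivAt (fun s' => hRS s' α (q s')) ((1 - q s) / (2 * s * (s + α * (1 - q s)))) s := by
  have hD' : HasDerivAt (fun s' => s' + α * (1 - q s')) (1 - α * q') s :=
    ((hasDerivAt_id s).fun_add ((hq.const_sub 1).const_mul α)).congr_deriv (by simp; ring)
  have hlam : HasDerivAt (fun s' => lamOf s' α (q s'))
      (-(1 - α * q') / (s + α * (1 - q s)) ^ 2) s :=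
    hD'.inv hD.ne'
  have hlog : HasDerivAt (fun s' => log (1 + α / s' * (1 - q s')))
      ((-(α / s ^ 2) * (1 - q s) - α / s * q') / (1 + α / s * (1 - q s))) s := by
    have hpos : 0 < 1 + α / s * (1 - q s) := by
      rw [show 1 + α / s * (1 - q s) = (s + α * (1 - q s)) / s by field_simp]
      positivity
    refine ((((hasDerivAt_inv hs.ne').const_mul α).fun_mul (hq.const_sub 1)).const_add 1 |>.log
      hpos.ne').congr_deriv ?_
    field_simp
    ring
  have h := ((hstat.comp s hlam).sub ((hlam.const_mul (1 / 2)).mul (hq.const_add 1))).sub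
    (hlog.const_mul (1 / (2 * α)))
  refine h.congr_deriv ?_
  simp only [lamOf]
  field_simp
  ring

/-- Envelope theorem: if `q*(σ²)` solves Tanaka's stationarity condition and is
differentiable in `σ²`, then
`d/dσ² h_RS(q*(σ²);σ²,α) = (1/(2σ²))·(1 − q*)/(σ² + α(1 − q*))`. -/
theorem hRS_envelope_deriv (α : ℝ) (hα : 0 < α) (qstar : ℝ → ℝ)
    (hfix : ∀ s : ℝ, 0 < s →
      qstar s = ∫ z, Real.tanh (lamOf s α (qstar s)
        + Real.sqrt (lamOf s α (qstar s)) * z) ^ 2 ∂stdGaussian)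
    (s : ℝ) (hs : 0 < s) (hdiff : DifferentiableAt ℝ qstar s) :
    deriv (fun s' => hRS s' α (qstar s')) s =
      1 / (2 * s) * ((1 - qstar s) / (s + α * (1 - qstar s))) := by
  have hq1 : qstar s < 1 := hfix s hs ▸ integral_tanh_sq_comp_lt_one (by fun_prop)
  have hD : 0 < s + α * (1 - qstar s) := by nlinarith
  have hstat : HasDerivAt scalarFreeEntropy ((1 + qstar s) / 2) (lamOf s α (qstar s)) := by
    have h := hasDerivAt_scalarFreeEntropy (show 0 < lamOf s α (qstar s) from inv_pos.2 hD)
    rwa [← hfix s hs] at h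
  rw [(hasDerivAt_hRS_comp hα.ne' hs hD hdiff.hasDerivAt hstat).deriv]
  field_simp
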